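/- arXiv:2307.15068 — 2 statements merged into one kernel-verified Lean document; each statement's English description precedes it below -/
import Mathlib

section
/- On a quaternion null submanifold M of a normal indefinite complex contact manifold, the second fundamental forms satisfy h^l(X, U) = h^s(X, U) = 0 and ∇_X U = -GX + σ(X)V for all X tangent to M, and similarly h^l(X, V) = h^s(X, V) = 0 and ∇_X V = -HX - σ(X)U. -/
/- STATEMENT 5: On a quaternion null submanifold M of a normal indefinite complex
contact manifold, h^l(X,U) = h^s(X,U) = 0 and ∇_X U = -GX + σ(X)V for all X tangent
to M, and similarly h^l(X,V) = h^s(X,V) = 0 and ∇_X V = -HX - σ(X)U.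
Vector fields are modelled as a module T over the ring of functions F; ∇̄ (nb) is the
ambient connection, ∇ (nab) the induced connection, hl, hs the second fundamental
forms with values in ltr(TM) and S(TM⊥). -/
theorem stmt_5 {F T : Type*} [CommRing F] [AddCommGroup T] [Module F T]
    (TM RadTM STM ltr Sperp : Submodule F T)
    (J G H : T →ₗ[F] T) (σ : T →ₗ[F] F) (U V : T)
    (nb nab : T → T → T) (hl hs : T →ₗ[F] T →ₗ[F] T)
    -- M is tangent to the characteristic bundle: U, V ∈ S(TM)
    (hUS : U ∈ STM) (hVS : V ∈ STM)
    -- decomposition TM = Rad TM ⊕ S(TM)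
    (hTM : RadTM ⊔ STM = TM)
    -- quaternion condition: Rad TM and S(TM) invariant under J, G, H
    (hJR : Submodule.map J RadTM = RadTM) (hGR : Submodule.map G RadTM = RadTM)
    (hHR : Submodule.map H RadTM = RadTM)
    (hJS : Submodule.map J STM = STM) (hGS : Submodule.map G STM = STM)
    (hHS : Submodule.map H STM = STM)
    -- normality: ∇̄_X U = -GX + σ(X)V and ∇̄_X V = -HX - σ(X)U
    (hnU : ∀ X : T, nb X U = -(G X) + σ X • V)
    (hnV : ∀ X : T, nb X V = -(H X) - σ X • U)
    -- Gauss formula: ∇̄_X Y = ∇_X Y + h^l(X,Y) + h^s(X,Y)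
    (hGauss : ∀ X ∈ TM, ∀ Y ∈ TM, nb X Y = nab X Y + hl X Y + hs X Y
      ∧ nab X Y ∈ TM ∧ hl X Y ∈ ltr ∧ hs X Y ∈ Sperp)
    -- transversality of the decomposition T M̄ = TM ⊕ ltr(TM) ⊕ S(TM⊥)
    (hindep1 : TM ⊓ (ltr ⊔ Sperp) = ⊥) (hindep2 : ltr ⊓ Sperp = ⊥) :
    ∀ X ∈ TM, hl X U = 0 ∧ hs X U = 0 ∧ nab X U = -(G X) + σ X • V
      ∧ hl X V = 0 ∧ hs X V = 0 ∧ nab X V = -(H X) - σ X • U := by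
  have hSle : STM ≤ TM := hTM ▸ le_sup_right
  have hU : U ∈ TM := hSle hUS
  have hV : V ∈ TM := hSle hVS
  have hmap : ∀ (L : T →ₗ[F] T), Submodule.map L RadTM = RadTM →
      Submodule.map L STM = STM → ∀ x ∈ TM, L x ∈ TM := by
    intro L hR hS x hx
    have hmt : Submodule.map L TM = TM := by
      rw [← hTM, Submodule.map_sup, hR, hS]
    rw [← hmt]; exact Submodule.mem_map_of_mem hx
  intro X hX
  have hGX : G X ∈ TM := hmap G hGR hGS X hX
  have hHX : H X ∈ TM := hmap H hHR hHS X hX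
  obtain ⟨hgU, hnabU, hlU, hsU⟩ := hGauss X hX U hU
  obtain ⟨hgV, hnabV, hlV, hsV⟩ := hGauss X hX V hV
  have htU : -(G X) + σ X • V ∈ TM :=
    Submodule.add_mem _ (Submodule.neg_mem _ hGX) (Submodule.smul_mem _ _ hV)
  have htV : -(H X) - σ X • U ∈ TM :=
    Submodule.sub_mem _ (Submodule.neg_mem _ hHX) (Submodule.smul_mem _ _ hU)
  have key : ∀ (W : T), W ∈ TM → nb X W = nab X W + hl X W + hs X W →
      nab X W ∈ TM → hl X W ∈ ltr → hs X W ∈ Sperp → nb X W ∈ TM →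
      hl X W = 0 ∧ hs X W = 0 ∧ nab X W = nb X W := by
    intro W hW hg hn hlm hsm hnb
    have hsum : hl X W + hs X W = 0 := by
      have hmem : hl X W + hs X W ∈ TM ⊓ (ltr ⊔ Sperp) := by
        refine ⟨?_, Submodule.add_mem_sup hlm hsm⟩
        have he : hl X W + hs X W = nb X W - nab X W := by rw [hg]; abel
        rw [he]; exact Submodule.sub_mem _ hnb hn
      rw [hindep1] at hmem; exact hmem
    have hl0 : hl X W = 0 := by
      have hmem : hl X W ∈ ltr ⊓ Sperp := by
        refine ⟨hlm, ?_⟩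
        have : hl X W = -(hs X W) := eq_neg_of_add_eq_zero_left hsum
        rw [this]; exact Submodule.neg_mem _ hsm
      rw [hindep2] at hmem; exact hmem
    have hs0 : hs X W = 0 := by rw [hl0, zero_add] at hsum; exact hsum
    refine ⟨hl0, hs0, ?_⟩
    rw [hg, hl0, hs0, add_zero, add_zero]
  obtain ⟨h1, h2, h3⟩ := key U hU hgU hnabU hlU hsU (by rw [hnU]; exact htU)
  obtain ⟨h4, h5, h6⟩ := key V hV hgV hnabV hlV hsV (by rw [hnV]; exact htV)
  exact ⟨h1, h2, by rw [h3, hnU], h4, h5, by rw [h6, hnV]⟩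
end

section
/- On a totally umbilic screen real null submanifold of a normal indefinite complex contact manifold, the screen transversal curvature vector H^s is orthogonal to U and V: ḡ(H^s, U) = ḡ(H^s, V) = 0. -/
/- STATEMENT 16: On a totally umbilic screen real null submanifold of a normal
indefinite complex contact manifold, the screen transversal curvature vector H^s is
orthogonal to U and V: ḡ(H^s,U) = ḡ(H^s,V) = 0. -/
theorem stmt_16 {F T : Type*} [CommRing F] [AddCommGroup T] [Module F T]
    (TM RadTM STM ltr Sperp : Submodule F T)
    (G H : T →ₗ[F] T) (σ : T →ₗ[F] F) (U V : T)
    (gb : T →ₗ[F] T →ₗ[F] F)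
    (nb : T → T → T) (nbs Dl A : T → T → T)
    (hl hs : T →ₗ[F] T →ₗ[F] T) (Hl Hs : T)
    (hRad : RadTM ≤ TM) (hSTM : STM ≤ TM)
    -- screen real: V = Span{U,V} ⊂ S(TM⊥), and ḡ(GX,Y) = ḡ(HX,Y) = 0 on TM
    (hUSp : U ∈ Sperp) (hVSp : V ∈ Sperp)
    (hGperp : ∀ X ∈ TM, ∀ Y ∈ TM, gb (G X) Y = 0 ∧ gb (H X) Y = 0)
    -- totally umbilic: h^l(X,Y) = g(X,Y)H^l, h^s(X,Y) = g(X,Y)H^s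
    (hHl : Hl ∈ ltr) (hHs : Hs ∈ Sperp)
    (humb : ∀ X ∈ TM, ∀ Y ∈ TM, hl X Y = gb X Y • Hl ∧ hs X Y = gb X Y • Hs)
    -- normality: ∇̄_X U = -GX + σ(X)V and ∇̄_X V = -HX - σ(X)U
    (hnU : ∀ X : T, nb X U = -(G X) + σ X • V)
    (hnV : ∀ X : T, nb X V = -(H X) - σ X • U)
    -- Weingarten formula: ∇̄_X W = -A_W X + ∇^s_X W + D^l(X,W) for W ∈ S(TM⊥)
    (hWein : ∀ X ∈ TM, ∀ W ∈ Sperp, nb X W = -(A W X) + nbs X W + Dl X W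
      ∧ A W X ∈ TM ∧ nbs X W ∈ Sperp ∧ Dl X W ∈ ltr)
    -- relation (mas13): ḡ(h^s(X,Y),W) + ḡ(Y, D^l(X,W)) = g(A_W X, Y)
    (hmas13 : ∀ X ∈ TM, ∀ Y ∈ TM, ∀ W ∈ Sperp,
      gb (hs X Y) W + gb Y (Dl X W) = gb (A W X) Y)
    -- orthogonality relations
    (horth1 : ∀ Z ∈ TM, ∀ W ∈ Sperp, gb Z W = 0)
    (horth2 : ∀ Z ∈ STM, ∀ L ∈ ltr, gb Z L = 0)
    (hgsym : ∀ X Y : T, gb X Y = gb Y X)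
    -- nondegeneracy of S(TM)
    (hnd : ∀ c : F, (∀ X ∈ STM, ∀ Y ∈ STM, gb X Y * c = 0) → c = 0) :
    gb Hs U = 0 ∧ gb Hs V = 0 := by
  constructor
  · apply hnd
    intro X hX Y hY
    have hXT := hSTM hX
    have hYT := hSTM hY
    have hW := hWein X hXT U hUSp
    have e : -(A U X) + nbs X U + Dl X U = -(G X) + σ X • V := hW.1.symm.trans (hnU X)
    have e2 := congrArg (fun t => gb t Y) e
    simp only [map_add, map_neg, map_smul, LinearMap.add_apply, LinearMap.neg_apply,
      LinearMap.smul_apply, smul_eq_mul] at e2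
    have h1 : gb (nbs X U) Y = 0 := by rw [hgsym]; exact horth1 Y hYT _ hW.2.2.1
    have h2 : gb Y (Dl X U) = 0 := horth2 Y hY _ hW.2.2.2
    have h3 : gb (Dl X U) Y = 0 := by rw [hgsym]; exact h2
    have h4 : gb (G X) Y = 0 := (hGperp X hXT Y hYT).1
    have h5 : gb V Y = 0 := by rw [hgsym]; exact horth1 Y hYT V hVSp
    have hA : gb (A U X) Y = 0 := by
      rw [h1, h3, h4, h5] at e2; linear_combination -e2
    have h13 := hmas13 X hXT Y hYT U hUSp
    rw [(humb X hXT Y hYT).2, h2, hA, map_smul, LinearMap.smul_apply, smul_eq_mul] at h13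
    linear_combination h13
  · apply hnd
    intro X hX Y hY
    have hXT := hSTM hX
    have hYT := hSTM hY
    have hW := hWein X hXT V hVSp
    have e : -(A V X) + nbs X V + Dl X V = -(H X) - σ X • U := hW.1.symm.trans (hnV X)
    have e2 := congrArg (fun t => gb t Y) e
    simp only [map_add, map_sub, map_neg, map_smul, LinearMap.add_apply, LinearMap.sub_apply,
      LinearMap.neg_apply, LinearMap.smul_apply, smul_eq_mul] at e2
    have h1 : gb (nbs X V) Y = 0 := by rw [hgsym]; exact horth1 Y hYT _ hW.2.2.1
    have h2 : gb Y (Dl X V) = 0 := horth2 Y hY _ hW.2.2.2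
    have h3 : gb (Dl X V) Y = 0 := by rw [hgsym]; exact h2
    have h4 : gb (H X) Y = 0 := (hGperp X hXT Y hYT).2
    have h5 : gb U Y = 0 := by rw [hgsym]; exact horth1 Y hYT U hUSp
    have hA : gb (A V X) Y = 0 := by
      rw [h1, h3, h4, h5] at e2; linear_combination -e2
    have h13 := hmas13 X hXT Y hYT V hVSp
    rw [(humb X hXT Y hYT).2, h2, hA, map_smul, LinearMap.smul_apply, smul_eq_mul] at h13
    linear_combination h13
end
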